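/- arXiv:2508.03552 — 2 statements merged into one kernel-verified Lean document; each statement's English description precedes it below -/
import Mathlib

section
/- Every nonzero codeword of the twisted generalized Reed–Solomon code C_{k,1,k-1}(α,𝟏,η) has Hamming weight at least n-k+1 (equivalently, the code is MDS) if and only if η·∑_{i∈I} α_i ≠ -1 for every subset I ⊆ {1,…,n} with |I| = k. -/
/-! A twisted polynomial of degree at most `k` vanishing at `k` distinct points `α_i`, `i ∈ I`, is
`c · ∏_{i ∈ I} (X - α_i)`, whose coefficients of `X^k` and `X^(k-1)` are `c` and `-c ∑_{i ∈ I} α_i`.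
The twist condition `a_k = η a_(k-1)` then forces `c = 0` unless `η ∑_{i ∈ I} α_i = -1`. So a nonzero
codeword has fewer than `k` zeros unless some `k`-subset has `η ∑ α_i = -1`, and for such a subset
`∏_{i ∈ I} (X - α_i)` is itself twisted and gives a codeword of weight exactly `n - k`. -/

open Polynomial

/-- The set of `(k,1,ℓ,η)`-twisted polynomials:
`{ ∑_{i=0}^{k-1} a_i x^i + η a_ℓ x^k : a_i ∈ F }`. -/
def twistedSpace {F : Type*} [Field F] (k ℓ : ℕ) (hℓ : ℓ < k) (η : F) :
    Set (Polynomial F) :=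
  {f | ∃ a : Fin k → F,
    f = (∑ i : Fin k, Polynomial.C (a i) * Polynomial.X ^ (i : ℕ))
          + Polynomial.C (η * a ⟨ℓ, hℓ⟩) * Polynomial.X ^ k}

/-- The twisted generalized Reed–Solomon code `C_{k,1,ℓ}(α, 1, η)`. -/
def tgrsCode {F : Type*} [Field F] {n : ℕ} (k ℓ : ℕ) (hℓ : ℓ < k)
    (α : Fin n → F) (η : F) : Set (Fin n → F) :=
  {v | ∃ f ∈ twistedSpace k ℓ hℓ η, ∀ j, v j = f.eval (α j)}

namespace Polynomial

theorem coeff_sum_fin_C_mul_X_pow {R : Type*} [Semiring R] {k : ℕ} (a : Fin k → R) (j : ℕ) :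
    (∑ i : Fin k, C (a i) * X ^ (i : ℕ)).coeff j = if h : j < k then a ⟨j, h⟩ else 0 := by
  simp only [finsetSum_coeff, coeff_C_mul_X_pow]
  split_ifs with h
  · rw [Finset.sum_eq_single ⟨j, h⟩ (fun b _ hb => if_neg fun hjb => hb (Fin.ext hjb.symm))
      (by simp)]
    simp
  · exact Finset.sum_eq_zero fun b _ => if_neg fun hjb : j = b => h (hjb ▸ b.isLt)

variable {ι F : Type*} [Field F] {α : ι → F}

theorem natDegree_prod_X_sub_C (I : Finset ι) (α : ι → F) :
    (∏ i ∈ I, (X - C (α i))).natDegree = I.card := by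
  simp [natDegree_prod _ _ fun i _ => X_sub_C_ne_zero (α i)]

theorem eval_prod_X_sub_C_eq_zero_iff (hα : Function.Injective α) (I : Finset ι) (j : ι) :
    (∏ i ∈ I, (X - C (α i))).eval (α j) = 0 ↔ j ∈ I := by
  simp [eval_prod, Finset.prod_eq_zero_iff, sub_eq_zero, hα.eq_iff]

theorem eq_C_leadingCoeff_mul_prod_X_sub_C (hα : Function.Injective α) {f : F[X]}
    {I : Finset ι} (hdeg : f.natDegree ≤ I.card) (hroot : ∀ i ∈ I, f.eval (α i) = 0) :
    f = C f.leadingCoeff * ∏ i ∈ I, (X - C (α i)) := by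
  refine eq_leadingCoeff_mul_of_monic_of_dvd_of_natDegree_le (monic_prod_X_sub_C α I) ?_
    (by rwa [natDegree_prod_X_sub_C])
  exact Finset.prod_dvd_of_coprime ((pairwise_coprime_X_sub_C hα).set_pairwise _)
    fun i hi => dvd_iff_isRoot.mpr (hroot i hi)

end Polynomial

open Finset in
theorem hammingNorm_add_card_filter_eq_zero {ι F : Type*} [Fintype ι] [Zero F] [DecidableEq F]
    (v : ι → F) : hammingNorm v + #{i | v i = 0} = Fintype.card ι := by
  rw [hammingNorm, add_comm, card_filter_add_card_filter_not, card_univ]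

section TwistedSpace

variable {F : Type*} [Field F] {k : ℕ} {η : F}

theorem mem_twistedSpace_iff {ℓ : ℕ} (hℓ : ℓ < k) (f : F[X]) :
    f ∈ twistedSpace k ℓ hℓ η ↔ f.natDegree ≤ k ∧ f.coeff k = η * f.coeff ℓ := by
  constructor
  · rintro ⟨a, rfl⟩
    refine ⟨natDegree_add_le_of_degree_le ?_ (natDegree_C_mul_X_pow_le _ _), ?_⟩
    · exact natDegree_sum_le_of_forall_le _ _ fun i _ =>
        (natDegree_C_mul_X_pow_le _ _).trans i.isLt.le
    · rw [coeff_add, coeff_add, coeff_sum_fin_C_mul_X_pow, coeff_sum_fin_C_mul_X_pow,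
        coeff_C_mul_X_pow, coeff_C_mul_X_pow]
      simp [hℓ, hℓ.ne]
  · rintro ⟨hdeg, hcoeff⟩
    refine ⟨fun i => f.coeff i, ?_⟩
    ext j
    rw [coeff_add, coeff_sum_fin_C_mul_X_pow, coeff_C_mul_X_pow]
    rcases lt_trichotomy j k with h | rfl | h
    · simp [h, h.ne]
    · simp [hcoeff]
    · simp [h.not_gt, h.ne', coeff_eq_zero_of_natDegree_lt (hdeg.trans_lt h)]

theorem C_mul_prod_X_sub_C_mem_twistedSpace_iff {ι : Type*} {c : F} (hc : c ≠ 0)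
    {I : Finset ι} (α : ι → F) (hI : I.card = k) (hk : 1 ≤ k) :
    C c * ∏ i ∈ I, (X - C (α i)) ∈ twistedSpace k (k - 1) (Nat.sub_lt hk Nat.one_pos) η ↔
      η * ∑ i ∈ I, α i = -1 := by
  subst hI
  have hdeg := natDegree_prod_X_sub_C I α
  have hlead : (∏ i ∈ I, (X - C (α i))).coeff I.card = 1 :=
    hdeg ▸ (monic_prod_X_sub_C α I).coeff_natDegree
  rw [mem_twistedSpace_iff, coeff_C_mul, coeff_C_mul, hlead,
    prod_X_sub_C_coeff_card_pred I α hk]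
  refine ⟨fun h => ?_, fun h => ⟨(natDegree_C_mul_le _ _).trans hdeg.le, ?_⟩⟩
  · exact mul_left_cancel₀ hc (by linear_combination h.2)
  · linear_combination c * h

theorem eq_zero_of_mem_twistedSpace_of_eval_eq_zero {ι : Type*} {α : ι → F}
    (hα : Function.Injective α) (hk : 1 ≤ k) {I : Finset ι} (hI : I.card = k) {f : F[X]}
    (hf : f ∈ twistedSpace k (k - 1) (Nat.sub_lt hk Nat.one_pos) η)
    (hroot : ∀ i ∈ I, f.eval (α i) = 0) (hη : η * ∑ i ∈ I, α i ≠ -1) : f = 0 := by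
  have hdeg := ((mem_twistedSpace_iff _ f).mp hf).1
  have hf_eq := eq_C_leadingCoeff_mul_prod_X_sub_C hα (hI ▸ hdeg) hroot
  by_contra hf0
  rw [hf_eq] at hf
  exact hη ((C_mul_prod_X_sub_C_mem_twistedSpace_iff (leadingCoeff_ne_zero.mpr hf0) α hI hk).mp hf)

end TwistedSpace

theorem tgrs_mds_iff_general {F : Type*} [Field F] [DecidableEq F] {n k : ℕ}
    (hk : 1 ≤ k) (hkn : k < n)
    (α : Fin n → F) (hα : Function.Injective α) (η : F) :
    (∀ v ∈ tgrsCode k (k - 1) (Nat.sub_lt hk Nat.one_pos) α η,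
        v ≠ 0 → n - k + 1 ≤ hammingNorm v)
      ↔ ∀ I : Finset (Fin n), I.card = k → η * ∑ i ∈ I, α i ≠ -1 := by
  constructor
  · intro hmds I hI hbad
    have hP : ∏ i ∈ I, (X - C (α i)) ∈ twistedSpace k (k - 1) (Nat.sub_lt hk Nat.one_pos) η := by
      simpa using (C_mul_prod_X_sub_C_mem_twistedSpace_iff one_ne_zero α hI hk).mpr hbad
    set v : Fin n → F := fun j => (∏ i ∈ I, (X - C (α i))).eval (α j)
    have hzeros : ({j | v j = 0} : Finset (Fin n)) = I := by
      ext j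
      simp [v, eval_prod_X_sub_C_eq_zero_iff hα]
    have hweight : hammingNorm v = n - k := by
      have := hammingNorm_add_card_filter_eq_zero v
      rw [hzeros, hI, Fintype.card_fin] at this
      omega
    have hv0 : v ≠ 0 := hammingNorm_ne_zero_iff.mp (by omega)
    have := hmds v ⟨_, hP, fun j => rfl⟩ hv0
    omega
  · rintro hcond v ⟨f, hf, hvf⟩ hv0
    by_contra! hlight
    have hzeros : k ≤ ({j | f.eval (α j) = 0} : Finset (Fin n)).card := by
      have := hammingNorm_add_card_filter_eq_zero v
      simp only [hvf, Fintype.card_fin] at this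
      omega
    obtain ⟨I, hIZ, hI⟩ := Finset.exists_subset_card_eq hzeros
    have hf0 := eq_zero_of_mem_twistedSpace_of_eval_eq_zero hα hk hI hf
      (fun i hi => (Finset.mem_filter.mp (hIZ hi)).2) (hcond I hI)
    exact hv0 (funext fun j => by simp [hvf, hf0])

/-- The code `C_{k,1,k-1}(α,1,η)` is MDS (every nonzero codeword has Hamming weight
at least `n-k+1`) iff `η ∑_{i∈I} α_i ≠ -1` for every `k`-subset `I`. -/
theorem tgrs_mds_iff {F : Type*} [Field F] [DecidableEq F] {n k : ℕ}
    (hk : 1 ≤ k) (hkn : k < n)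
    (α : Fin n → F) (hα : Function.Injective α) (η : F) (hη : η ≠ 0) :
    (∀ v ∈ tgrsCode k (k - 1) (Nat.sub_lt hk Nat.one_pos) α η,
        v ≠ 0 → n - k + 1 ≤ hammingNorm v)
      ↔ ∀ I : Finset (Fin n), I.card = k → η * ∑ i ∈ I, α i ≠ -1 :=
  tgrs_mds_iff_general hk hkn α hα η
end

section
/- Suppose n - k is even and that η·∑_{i∈I} α_i ≠ -1 for every subset I ⊆ {1,…,n} with |I| = k. Let y ∈ 𝔽_q^n and let f_1, f_2 ∈ V_{(k,1,k-1,η)} be twisted polynomials such that the Hamming distance between (f_i(α_1),…,f_i(α_n)) and y is at most (n-k)/2 - 1 for i = 1, 2. Then f_1 = f_2; that is, the decoding algorithm correcting up to (n-k)/2 - 1 errors has a unique output. -/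
/-!
Twisted polynomials have degree at most `k`, so two of them whose evaluation vectors are both
within `(n - k) / 2 - 1` of `y` agree at `n - 2 ((n - k) / 2 - 1) > k` of the distinct points
`α j`, and a polynomial of degree at most `k` with more than `k` roots is zero.
-/

open Polynomial

open Finset

theorem card_filter_eq_add_hammingDist {ι : Type*} [Fintype ι] {β : ι → Type*}
    [∀ i, DecidableEq (β i)] (x y : ∀ i, β i) :
    #{i | x i = y i} + hammingDist x y = Fintype.card ι :=
  card_filter_add_card_filter_not _

namespace Polynomial

theorem eq_of_degree_le_of_hammingDist_eval_lt {R ι : Type*} [CommRing R] [IsDomain R]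
    [DecidableEq R] [Fintype ι] {α : ι → R} (hα : Function.Injective α) {k : ℕ} {p q : R[X]}
    (hp : p.degree ≤ k) (hq : q.degree ≤ k)
    (hdist : hammingDist (fun i => p.eval (α i)) (fun i => q.eval (α i)) < Fintype.card ι - k) :
    p = q := by
  have hagree := card_filter_eq_add_hammingDist (fun i => p.eval (α i)) (fun i => q.eval (α i))
  have hk : (k : WithBot ℕ) < #{i | p.eval (α i) = q.eval (α i)} := by
    norm_cast; omega
  exact eq_of_degrees_lt_of_eval_index_eq _ hα.injOn (hp.trans_lt hk) (hq.trans_lt hk)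
    fun i hi => (mem_filter.mp hi).2

end Polynomial

theorem degree_le_of_mem_twistedSpace {F : Type*} [Field F] {k ℓ : ℕ} {hℓ : ℓ < k} {η : F}
    {f : F[X]} (hf : f ∈ twistedSpace k ℓ hℓ η) : f.degree ≤ k := by
  obtain ⟨a, rfl⟩ := hf
  refine (degree_add_le _ _).trans (max_le ?_ (degree_C_mul_X_pow_le _ _))
  refine (degree_sum_le _ _).trans (Finset.sup_le fun i _ => (degree_C_mul_X_pow_le _ _).trans ?_)
  exact_mod_cast i.is_lt.le

theorem decoding_unique_mds_even_general {F : Type*} [Field F] [DecidableEq F] {n k : ℕ}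
    (hk : 1 ≤ k) (hkn : k < n)
    (α : Fin n → F) (hα : Function.Injective α) (η : F)
    (y : Fin n → F)
    (f₁ f₂ : Polynomial F)
    (hf₁ : f₁ ∈ twistedSpace k (k - 1) (Nat.sub_lt hk Nat.one_pos) η)
    (hf₂ : f₂ ∈ twistedSpace k (k - 1) (Nat.sub_lt hk Nat.one_pos) η)
    (hd₁ : hammingDist (fun j => f₁.eval (α j)) y ≤ (n - k) / 2 - 1)
    (hd₂ : hammingDist (fun j => f₂.eval (α j)) y ≤ (n - k) / 2 - 1) :
    f₁ = f₂ := by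
  refine eq_of_degree_le_of_hammingDist_eval_lt hα (degree_le_of_mem_twistedSpace hf₁)
    (degree_le_of_mem_twistedSpace hf₂) ?_
  have htriangle := hammingDist_triangle_right (fun j => f₁.eval (α j)) (fun j => f₂.eval (α j)) y
  rw [Fintype.card_fin]
  omega

/-- Uniqueness of decoding up to `(n-k)/2 - 1` errors for the MDS TGRS code
with `n - k` even. -/
theorem decoding_unique_mds_even {F : Type*} [Field F] [DecidableEq F] {n k : ℕ}
    (hk : 1 ≤ k) (hkn : k < n) (heven : Even (n - k)) (hnk : 2 ≤ n - k)
    (α : Fin n → F) (hα : Function.Injective α) (η : F) (hη : η ≠ 0)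
    (hmds : ∀ I : Finset (Fin n), I.card = k → η * ∑ i ∈ I, α i ≠ -1)
    (y : Fin n → F)
    (f₁ f₂ : Polynomial F)
    (hf₁ : f₁ ∈ twistedSpace k (k - 1) (Nat.sub_lt hk Nat.one_pos) η)
    (hf₂ : f₂ ∈ twistedSpace k (k - 1) (Nat.sub_lt hk Nat.one_pos) η)
    (hd₁ : hammingDist (fun j => f₁.eval (α j)) y ≤ (n - k) / 2 - 1)
    (hd₂ : hammingDist (fun j => f₂.eval (α j)) y ≤ (n - k) / 2 - 1) :
    f₁ = f₂ :=
  decoding_unique_mds_even_general hk hkn α hα η y f₁ f₂ hf₁ hf₂ hd₁ hd₂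
end
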